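/- Parametrized construction of lunar magic squares: let B ≥ 2, let a, b, c, d, α, β, γ, δ be natural numbers such that a dominates b, c, and d in base B, α dominates β, γ, and δ in base B, and let k be such that α, β, γ, δ < B^k. Then the 3×3 matrix [[a·B^k, b·B^k ⊕ α, a·B^k ⊕ δ], [a·B^k ⊕ γ, 0, c·B^k ⊕ α], [d·B^k ⊕ α, a·B^k ⊕ β, α]] is a base-B lunar magic square with total a·B^k ⊕ α. -/

import Mathlib

/-- The `d`-th base-`B` digit of `n` (position 0 is the least significant digit). -/
def lunarDigit (B n d : ℕ) : ℕ := n / B ^ d % B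

/-- Base-`B` lunar addition: the `d`-th digit of `x ⊕ y` is the maximum of the
`d`-th digits of `x` and `y` (no carries). -/
def lunarAdd (B x y : ℕ) : ℕ :=
  ∑ d ∈ Finset.range (x + y + 1), max (lunarDigit B x d) (lunarDigit B y d) * B ^ d

/-- Base-`B` lunar multiplication: the `d`-th digit of `x ⊗ y` is the maximum over
`j + k = d` of the minimum of the `j`-th digit of `x` and the `k`-th digit of `y`. -/
def lunarMul (B x y : ℕ) : ℕ :=
  ∑ d ∈ Finset.range (x + y + 1),
    ((Finset.range (d + 1)).sup fun j => min (lunarDigit B x j) (lunarDigit B y (d - j))) * B ^ d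

/-- `M` is a 3×3 base-`B` lunar magic square with total `T`: the lunar sums of the
three rows, the three columns, and the two diagonals all equal `T`. -/
def IsLunarMagic (B : ℕ) (M : Fin 3 → Fin 3 → ℕ) (T : ℕ) : Prop :=
  (∀ i, lunarAdd B (lunarAdd B (M i 0) (M i 1)) (M i 2) = T) ∧
  (∀ j, lunarAdd B (lunarAdd B (M 0 j) (M 1 j)) (M 2 j) = T) ∧
  lunarAdd B (lunarAdd B (M 0 0) (M 1 1)) (M 2 2) = T ∧
  lunarAdd B (lunarAdd B (M 0 2) (M 1 1)) (M 2 0) = T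

/-- The nine entries of `M` are pairwise distinct. -/
def DistinctEntries (M : Fin 3 → Fin 3 → ℕ) : Prop :=
  ∀ i j i' j', M i j = M i' j' → i = i' ∧ j = j'

/-- `x` dominates `y` in base `B`: every base-`B` digit of `x` is at least the
corresponding digit of `y`; equivalently `x ⊕ y = x`. -/
def Dominates (B x y : ℕ) : Prop := lunarAdd B x y = x

/-!
Lunar addition acts on base-`B` digits as `max`, and a number is determined by its digits, so
each line of the square can be checked one digit at a time. The entries split into a high part
(a multiple of `B ^ k`) and a low part below `B ^ k`. At a position below `k` every line reads the
digit of `α` together with digits of `β`, `γ`, `δ` or `0`, whose maximum is the digit of `α`; at a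
position `n ≥ k` it reads the digit `n - k` of `a` together with those of `b`, `c`, `d` or `0`.
-/

section

variable {B : ℕ}

lemma lunarDigit_lt (hB : 0 < B) (n d : ℕ) : lunarDigit B n d < B :=
  Nat.mod_lt _ hB

lemma lunarDigit_eq_zero_of_lt {n d : ℕ} (h : n < B ^ d) : lunarDigit B n d = 0 := by
  simp [lunarDigit, Nat.div_eq_of_lt h]

@[simp]
lemma lunarDigit_zero_left (d : ℕ) : lunarDigit B 0 d = 0 := by
  simp [lunarDigit]

lemma lunarDigit_div_base (n d : ℕ) : lunarDigit B (n / B) d = lunarDigit B n (d + 1) := by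
  simp only [lunarDigit, Nat.div_div_eq_div_mul, pow_succ']

lemma lunarDigit_add_mul_pow (hB : 0 < B) {r N : ℕ} (hr : r < B ^ N) (x j : ℕ) :
    lunarDigit B (r + x * B ^ N) j = if j < N then lunarDigit B r j else lunarDigit B x (j - N) := by
  unfold lunarDigit
  split_ifs with hj
  · have hpow : B ^ N = B ^ (N - j - 1) * B * B ^ j := by
      rw [← pow_succ, ← pow_add]; congr 1; omega
    rw [hpow, ← mul_assoc, Nat.add_mul_div_right _ _ (pow_pos hB j), ← mul_assoc,
      Nat.add_mul_mod_self_right]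
  · rw [show j = N + (j - N) by omega, pow_add, ← Nat.div_div_eq_div_mul,
      Nat.add_mul_div_right _ _ (pow_pos hB N), Nat.div_eq_of_lt hr, zero_add,
      Nat.add_sub_cancel_left]

lemma lunarDigit_mul_pow (hB : 0 < B) (x k d : ℕ) :
    lunarDigit B (x * B ^ k) d = if d < k then 0 else lunarDigit B x (d - k) := by
  simpa using lunarDigit_add_mul_pow hB (pow_pos hB k) x d

lemma sum_mul_pow_lt {c : ℕ → ℕ} (hc : ∀ d, c d < B) (N : ℕ) :
    ∑ d ∈ Finset.range N, c d * B ^ d < B ^ N := by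
  induction N with
  | zero => simp
  | succ N ih =>
    calc ∑ d ∈ Finset.range (N + 1), c d * B ^ d
        < B ^ N + c N * B ^ N := by rw [Finset.sum_range_succ]; omega
      _ = (c N + 1) * B ^ N := by ring
      _ ≤ B ^ (N + 1) := by rw [pow_succ']; exact Nat.mul_le_mul_right _ (hc N)

lemma lunarDigit_sum_mul_pow {c : ℕ → ℕ} (hc : ∀ d, c d < B) (N j : ℕ) :
    lunarDigit B (∑ d ∈ Finset.range N, c d * B ^ d) j = if j < N then c j else 0 := by
  have hB : 0 < B := (Nat.zero_le _).trans_lt (hc 0)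
  induction N with
  | zero => simp
  | succ N ih =>
    rw [Finset.sum_range_succ, lunarDigit_add_mul_pow hB (sum_mul_pow_lt hc N), ih]
    rcases lt_trichotomy j N with h | rfl | h
    · simp [h, h.trans (Nat.lt_succ_self N)]
    · simp [lunarDigit, Nat.mod_eq_of_lt (hc j)]
    · have hcj : c N < B ^ (j - N) :=
        (hc N).trans_le (Nat.le_self_pow (by omega) B)
      simp [h.not_gt, show ¬ j < N + 1 by omega, lunarDigit_eq_zero_of_lt hcj]

lemma lunarDigit_lunarAdd (hB : 1 < B) (x y j : ℕ) :
    lunarDigit B (lunarAdd B x y) j = max (lunarDigit B x j) (lunarDigit B y j) := by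
  have hB0 : 0 < B := by omega
  rw [lunarAdd, lunarDigit_sum_mul_pow
    (fun d => max_lt (lunarDigit_lt hB0 x d) (lunarDigit_lt hB0 y d))]
  split_ifs with hj
  · rfl
  -- beyond position `x + y` both summands have no digits left
  have hsmall : ∀ z ≤ x + y, z < B ^ j := fun z hz =>
    (hz.trans (by omega)).trans_lt (Nat.lt_pow_self hB)
  simp [lunarDigit_eq_zero_of_lt (hsmall x (by omega)),
    lunarDigit_eq_zero_of_lt (hsmall y (by omega))]

lemma eq_of_lunarDigit_eq (hB : 1 < B) {x y : ℕ}
    (h : ∀ d, lunarDigit B x d = lunarDigit B y d) : x = y := by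
  suffices key : ∀ N x y, x < B ^ N → y < B ^ N →
      (∀ d, lunarDigit B x d = lunarDigit B y d) → x = y from
    key (x + y) x y ((Nat.le_add_right x y).trans_lt (Nat.lt_pow_self hB))
      ((Nat.le_add_left y x).trans_lt (Nat.lt_pow_self hB)) h
  intro N
  induction N with
  | zero => intro x y hx hy _; simp_all
  | succ N ih =>
    intro x y hx hy h
    have hdiv : x / B = y / B := by
      refine ih _ _ ?_ ?_ fun d => ?_
      · exact Nat.div_lt_of_lt_mul (by rwa [← pow_succ'])
      · exact Nat.div_lt_of_lt_mul (by rwa [← pow_succ'])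
      · simp only [lunarDigit_div_base, h]
    have hmod : x % B = y % B := by simpa [lunarDigit] using h 0
    rw [← Nat.div_add_mod x B, ← Nat.div_add_mod y B, hdiv, hmod]

lemma dominates_iff (hB : 1 < B) {x y : ℕ} :
    Dominates B x y ↔ ∀ d, lunarDigit B y d ≤ lunarDigit B x d := by
  refine ⟨fun h d => ?_, fun h => eq_of_lunarDigit_eq hB fun d => ?_⟩
  · have := congrArg (lunarDigit B · d) h
    simp only [lunarDigit_lunarAdd hB] at this
    omega
  · rw [lunarDigit_lunarAdd hB, max_eq_left (h d)]

end

theorem stmt_8 (B : ℕ) (hB : 2 ≤ B) (a b c d α β γ δ k : ℕ)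
    (hab : Dominates B a b) (hac : Dominates B a c) (had : Dominates B a d)
    (hαβ : Dominates B α β) (hαγ : Dominates B α γ) (hαδ : Dominates B α δ)
    (hα : α < B ^ k) (hβ : β < B ^ k) (hγ : γ < B ^ k) (hδ : δ < B ^ k) :
    IsLunarMagic B
      ![![a * B ^ k, lunarAdd B (b * B ^ k) α, lunarAdd B (a * B ^ k) δ],
        ![lunarAdd B (a * B ^ k) γ, 0, lunarAdd B (c * B ^ k) α],
        ![lunarAdd B (d * B ^ k) α, lunarAdd B (a * B ^ k) β, α]]
      (lunarAdd B (a * B ^ k) α) := by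
  have hB0 : 0 < B := by omega
  simp only [dominates_iff hB] at hab hac had hαβ hαγ hαδ
  have hlow : ∀ x < B ^ k, ∀ n, k ≤ n → lunarDigit B x n = 0 := fun x hx n hn =>
    lunarDigit_eq_zero_of_lt (hx.trans_le (Nat.pow_le_pow_right hB0 hn))
  refine ⟨fun i => ?_, fun j => ?_, ?_, ?_⟩ <;> [fin_cases i; fin_cases j; skip; skip] <;>
  · refine eq_of_lunarDigit_eq hB fun n => ?_
    rcases Nat.lt_or_ge n k with h | h
    · simp [lunarDigit_lunarAdd hB, lunarDigit_mul_pow hB0, h, hαβ n, hαγ n, hαδ n]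
    · simp [lunarDigit_lunarAdd hB, lunarDigit_mul_pow hB0, h.not_gt, hlow α hα n h,
        hlow β hβ n h, hlow γ hγ n h, hlow δ hδ n h, hab (n - k), hac (n - k), had (n - k)]
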